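/- arXiv:2509.02882 — 4 statements merged into one kernel-verified Lean document; each statement's English description precedes it below -/
import Mathlib

section
/- Let A ⊆ ℕ be a finite nonempty set that admits a fibered subset. Then #A ≥ min_σ FIB(S_A^{(2)}, σ), where the minimum is taken over all assignment functions σ on S_A^{(2)}. -/
open Polynomial
open scoped BigOperators

noncomputable section

/-- The mask polynomial `A(X) = ∑_{a ∈ A} X^a` of a finite set `A ⊆ ℕ`. -/
def maskPoly (A : Finset ℕ) : Polynomial ℤ := ∑ a ∈ A, Polynomial.X ^ a

/-- The accumulating zeroes `S_A^{(2)} = {s ∈ ℕ : Φ_s(X) ∣ A(X), gcd(s, #A) = 1}`. -/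
def SA2 (A : Finset ℕ) : Set ℕ :=
  {s | 0 < s ∧ Polynomial.cyclotomic s ℤ ∣ maskPoly A ∧ Nat.gcd s A.card = 1}

/-- The fiber `F_p^s(X) = 1 + X^{s/p} + ⋯ + X^{(p-1)s/p}` in the `p`-direction at
scale `s`. -/
def fiberPoly (p s : ℕ) : Polynomial ℤ :=
  ∑ j ∈ Finset.range p, Polynomial.X ^ (j * (s / p))

/-- `A` is fibered in the `p`-direction at scale `s`:
`A(X) ≡ P(X) F_p^s(X) mod X^s - 1` for some `P ∈ ℤ[X]`. -/
def FiberedAtScale (A : Finset ℕ) (p s : ℕ) : Prop :=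
  ∃ P : Polynomial ℤ, (Polynomial.X ^ s - 1 : Polynomial ℤ) ∣ (maskPoly A - P * fiberPoly p s)

/-- `σ` is an assignment function on `S` with respect to the primes `p 0, ..., p (K-1)`:
`σ(s) ∈ {0, ..., K-1}` and `p_{σ(s)} ∣ s` for all `s ∈ S`. -/
def IsAssignment (S : Set ℕ) (K : ℕ) (p : ℕ → ℕ) (σ : ℕ → ℕ) : Prop :=
  ∀ s ∈ S, σ s < K ∧ p (σ s) ∣ s

/-- `A` is `(S, σ)`-fibered: for every `s ∈ S`, `A mod s` is fibered in the
`p_{σ(s)}`-direction at scale `s`. -/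
def SigmaFibered (A : Finset ℕ) (S : Set ℕ) (p : ℕ → ℕ) (σ : ℕ → ℕ) : Prop :=
  ∀ s ∈ S, FiberedAtScale A (p (σ s)) s

/-- `A` admits a fibered subset: writing `lcm(S_A^{(2)}) = ∏_{k<K} p_k^{n_k}` with the
`p_k` distinct primes and `n_k ≥ 1`, there are an assignment function `σ` on `S_A^{(2)}`
and a nonempty subset `A' ⊆ A` which is `(S_A^{(2)}, σ)`-fibered. -/
def AdmitsFiberedSubset (A : Finset ℕ) : Prop :=
  ∃ (K : ℕ) (p n σ : ℕ → ℕ),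
    (∀ k < K, (p k).Prime) ∧
    (∀ k < K, ∀ l < K, p k = p l → k = l) ∧
    (∀ k < K, 1 ≤ n k) ∧
    (∀ s ∈ SA2 A, s ∣ ∏ k ∈ Finset.range K, p k ^ n k) ∧
    (∀ m : ℕ, (∀ s ∈ SA2 A, s ∣ m) → (∏ k ∈ Finset.range K, p k ^ n k) ∣ m) ∧
    IsAssignment (SA2 A) K p σ ∧
    ∃ A' : Finset ℕ, A' ⊆ A ∧ A'.Nonempty ∧ SigmaFibered A' (SA2 A) p σ

/-- `EXP_k(S, σ) = {α ≥ 1 : ∃ s ∈ S, gcd(s, p_k^{n_k}) = p_k^α and σ(s) = k}`. -/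
def expSet (S : Set ℕ) (p n : ℕ → ℕ) (σ : ℕ → ℕ) (k : ℕ) : Set ℕ :=
  {α | 0 < α ∧ ∃ s ∈ S, Nat.gcd s (p k ^ n k) = p k ^ α ∧ σ s = k}

/-- `FIB(S, σ) = ∏_{k<K} p_k^{E_k(S,σ)}` where `E_k(S,σ) = #EXP_k(S,σ)`. -/
def FIB (S : Set ℕ) (K : ℕ) (p n : ℕ → ℕ) (σ : ℕ → ℕ) : ℕ :=
  ∏ k ∈ Finset.range K, p k ^ (expSet S p n σ k).ncard

lemma fiberPoly_mul (p s : ℕ) (hps : p ∣ s) :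
    fiberPoly p s * ((X : Polynomial ℤ) ^ (s / p) - 1) = X ^ s - 1 := by
  have h1 : ∀ j : ℕ, (X : Polynomial ℤ) ^ (j * (s / p)) = ((X : Polynomial ℤ) ^ (s / p)) ^ j := by
    intro j; rw [← pow_mul, mul_comm]
  rw [fiberPoly]
  simp_rw [h1]
  rw [geom_sum_mul, ← pow_mul, Nat.div_mul_cancel hps]

lemma fiber_dvd_mask {A : Finset ℕ} {p s : ℕ} (hps : p ∣ s)
    (hf : FiberedAtScale A p s) : fiberPoly p s ∣ maskPoly A := by
  obtain ⟨P, Q, hQ⟩ := hf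
  refine ⟨P + ((X : Polynomial ℤ) ^ (s / p) - 1) * Q, ?_⟩
  have key := fiberPoly_mul p s hps
  have hQ' : maskPoly A - P * fiberPoly p s = (X ^ s - 1) * Q := hQ
  linear_combination hQ' - Q * key

lemma cyclo_not_dvd_X_pow_sub_one {q t : ℕ} (hq : 0 < q) (h : ¬ q ∣ t) :
    ¬ (cyclotomic q ℤ ∣ ((X : Polynomial ℤ) ^ t - 1)) := by
  intro hd
  have hd2 : cyclotomic q ℂ ∣ ((X : Polynomial ℂ) ^ t - 1) := by
    have := Polynomial.map_dvd (Int.castRingHom ℂ) hd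
    simpa [Polynomial.map_cyclotomic] using this
  obtain ⟨w, hw⟩ := hd2
  set ζ := Complex.exp (2 * Real.pi * Complex.I / q) with hζdef
  have hζ : IsPrimitiveRoot ζ q := Complex.isPrimitiveRoot_exp q hq.ne'
  have hroot : (cyclotomic q ℂ).IsRoot ζ := hζ.isRoot_cyclotomic hq
  have hz : ζ ^ t - 1 = 0 := by
    have := congrArg (Polynomial.eval ζ) hw
    simpa [hroot.eq_zero] using this
  exact h ((hζ.pow_eq_one_iff_dvd t).mp (sub_eq_zero.mp hz))

lemma cyclo_prime {q : ℕ} (hq : 0 < q) : Prime (cyclotomic q ℤ) :=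
  (UniqueFactorizationMonoid.irreducible_iff_prime).mp (cyclotomic.irreducible hq)

lemma cyclo_not_dvd_cyclo {q r : ℕ} (hq : 0 < q) (hr : 0 < r) (hne : q ≠ r) :
    ¬ (cyclotomic q ℤ ∣ cyclotomic r ℤ) := by
  intro hd
  have hd2 : cyclotomic q ℂ ∣ cyclotomic r ℂ := by
    have := Polynomial.map_dvd (Int.castRingHom ℂ) hd
    simpa [Polynomial.map_cyclotomic] using this
  set ζ := Complex.exp (2 * Real.pi * Complex.I / q) with hζdef
  have hζ : IsPrimitiveRoot ζ q := Complex.isPrimitiveRoot_exp q hq.ne'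
  have hroot : (cyclotomic q ℂ).IsRoot ζ := hζ.isRoot_cyclotomic hq
  obtain ⟨w, hw⟩ := hd2
  have hroot2 : (cyclotomic r ℂ).IsRoot ζ := by
    rw [IsRoot.def, hw, eval_mul, hroot.eq_zero, zero_mul]
  haveI : NeZero ((r : ℂ)) := ⟨by exact_mod_cast hr.ne'⟩
  have : IsPrimitiveRoot ζ r := (Polynomial.isRoot_cyclotomic_iff).mp hroot2
  exact hne (hζ.unique this)

lemma prod_cyclotomic_dvd {ι : Type} [DecidableEq ι] (T : Finset ι) (q : ι → ℕ)
    (h1 : ∀ i ∈ T, 0 < q i) (hinj : ∀ i ∈ T, ∀ j ∈ T, q i = q j → i = j)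
    (g : Polynomial ℤ) (hd : ∀ i ∈ T, cyclotomic (q i) ℤ ∣ g) :
    (∏ i ∈ T, cyclotomic (q i) ℤ) ∣ g := by
  classical
  induction T using Finset.induction_on generalizing g with
  | empty => simpa using one_dvd g
  | @insert i T hiT ih =>
    rw [Finset.prod_insert hiT]
    obtain ⟨h, hh⟩ := hd i (Finset.mem_insert_self i T)
    have hdvd_h : ∀ j ∈ T, cyclotomic (q j) ℤ ∣ h := by
      intro j hj
      have hdj : cyclotomic (q j) ℤ ∣ cyclotomic (q i) ℤ * h := by
        rw [← hh]; exact hd j (Finset.mem_insert_of_mem hj)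
      rcases (cyclo_prime (h1 j (Finset.mem_insert_of_mem hj))).dvd_mul.mp hdj with hc | hc
      · exfalso
        have hji : j ≠ i := fun he => hiT (he ▸ hj)
        have hqji : q j ≠ q i := fun he =>
          hji (hinj j (Finset.mem_insert_of_mem hj) i (Finset.mem_insert_self i T) he)
        exact cyclo_not_dvd_cyclo (h1 j (Finset.mem_insert_of_mem hj))
          (h1 i (Finset.mem_insert_self i T)) hqji hc
      · exact hc
    have := ih (fun j hj => h1 j (Finset.mem_insert_of_mem hj))
      (fun j hj l hl => hinj j (Finset.mem_insert_of_mem hj) l (Finset.mem_insert_of_mem hl))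
      h hdvd_h
    rw [hh]
    exact mul_dvd_mul_left _ this


/-- **Size bound for sets admitting a fibered subset**: if the finite nonempty set
`A ⊆ ℕ` admits a fibered subset, then `#A ≥ min_σ FIB(S_A^{(2)}, σ)`, the minimum being
over all assignment functions `σ` on `S_A^{(2)}`.  Here `lcm(S_A^{(2)}) = ∏_{k<K} p_k^{n_k}`
is the prime factorization of the lcm of `S_A^{(2)}`. -/
theorem card_ge_min_FIB_of_admitsFiberedSubset (A : Finset ℕ) (hA : A.Nonempty)
    (K : ℕ) (p n : ℕ → ℕ)
    (hp : ∀ k < K, (p k).Prime)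
    (hpinj : ∀ k < K, ∀ l < K, p k = p l → k = l)
    (hn : ∀ k < K, 1 ≤ n k)
    (hlcm₁ : ∀ s ∈ SA2 A, s ∣ ∏ k ∈ Finset.range K, p k ^ n k)
    (hlcm₂ : ∀ m : ℕ, (∀ s ∈ SA2 A, s ∣ m) → (∏ k ∈ Finset.range K, p k ^ n k) ∣ m)
    (hfib : ∃ σ : ℕ → ℕ, IsAssignment (SA2 A) K p σ ∧
      ∃ A' : Finset ℕ, A' ⊆ A ∧ A'.Nonempty ∧ SigmaFibered A' (SA2 A) p σ) :
    sInf {m : ℕ | ∃ σ : ℕ → ℕ, IsAssignment (SA2 A) K p σ ∧ m = FIB (SA2 A) K p n σ}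
      ≤ A.card := by
  classical
  obtain ⟨σ, hσ, A', hsub, hne, hfibA'⟩ := hfib
  refine le_trans (Nat.sInf_le ⟨σ, hσ, rfl⟩) (le_trans ?_ (Finset.card_le_card hsub))
  -- finiteness of the exponent sets
  have hfin : ∀ k, (expSet (SA2 A) p n σ k).Finite := by
    intro k
    by_cases hk : k < K
    · refine Set.Finite.subset (Set.finite_Icc 1 (n k)) ?_
      rintro α ⟨hα0, s, hsS, hgcd, -⟩
      have hdvd : p k ^ α ∣ p k ^ n k := hgcd ▸ Nat.gcd_dvd_right s (p k ^ n k)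
      exact ⟨hα0, (Nat.pow_dvd_pow_iff_le_right (hp k hk).one_lt).mp hdvd⟩
    · convert Set.finite_empty
      ext α
      simp only [expSet, Set.mem_setOf_eq, Set.mem_empty_iff_false, iff_false, not_and]
      rintro hα0 ⟨s, hsS, hgcd, hσs⟩
      exact hk (hσs ▸ (hσ s hsS).1)
  set expFin : ℕ → Finset ℕ := fun k => (hfin k).toFinset with hexpFin
  have hmemE : ∀ k α, α ∈ expFin k ↔ α ∈ expSet (SA2 A) p n σ k := by
    intro k α; rw [hexpFin]; exact Set.Finite.mem_toFinset _
  -- the key divisibility by prime-power cyclotomics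
  have key : ∀ k, k < K → ∀ α ∈ expSet (SA2 A) p n σ k,
      cyclotomic (p k ^ α) ℤ ∣ maskPoly A' := by
    intro k hk α hα
    obtain ⟨hα0, s, hsS, hgcd, hσs⟩ := hα
    have hprime := hp k hk
    have hs0 : 0 < s := hsS.1
    have hps : p k ∣ s := by have h := (hσ s hsS).2; rwa [hσs] at h
    have hfibs : FiberedAtScale A' (p k) s := by have h := hfibA' s hsS; rwa [hσs] at h
    have hαn : α ≤ n k := by
      have hdvd : p k ^ α ∣ p k ^ n k := hgcd ▸ Nat.gcd_dvd_right s (p k ^ n k)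
      exact (Nat.pow_dvd_pow_iff_le_right hprime.one_lt).mp hdvd
    have hpow_dvd : p k ^ α ∣ s := hgcd ▸ Nat.gcd_dvd_left s (p k ^ n k)
    have hq0 : 0 < p k ^ α := pow_pos hprime.pos _
    have hnot : ¬ p k ^ α ∣ (s / p k) := by
      intro hdvd
      have h1 : p k ^ (α + 1) ∣ s := by
        obtain ⟨c, hc⟩ := hdvd
        refine ⟨c, ?_⟩
        calc s = p k * (s / p k) := (Nat.mul_div_cancel' hps).symm
        _ = p k * (p k ^ α * c) := by rw [hc]
        _ = p k ^ (α + 1) * c := by ring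
      rcases lt_or_eq_of_le hαn with hcase | hcase
      · have h2 : p k ^ (α + 1) ∣ p k ^ n k := pow_dvd_pow _ hcase
        have h3 : p k ^ (α + 1) ∣ p k ^ α := hgcd ▸ Nat.dvd_gcd h1 h2
        have := (Nat.pow_dvd_pow_iff_le_right hprime.one_lt).mp h3
        omega
      · have hsM := hlcm₁ s hsS
        have h4 : p k ^ (n k + 1) ∣ ∏ l ∈ Finset.range K, p l ^ n l := by
          rw [← hcase]; exact h1.trans hsM
        have hM : (∏ l ∈ Finset.range K, p l ^ n l)
            = p k ^ n k * ∏ l ∈ (Finset.range K).erase k, p l ^ n l :=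
          (Finset.mul_prod_erase (Finset.range K) (fun l => p l ^ n l)
            (Finset.mem_range.mpr hk)).symm
        rw [hM, pow_succ] at h4
        have h5 : p k ∣ ∏ l ∈ (Finset.range K).erase k, p l ^ n l := by
          have hpos : 0 < p k ^ n k := pow_pos hprime.pos _
          exact (Nat.mul_dvd_mul_iff_left hpos).mp h4
        obtain ⟨l, hl, hpl⟩ := hprime.prime.exists_mem_finset_dvd h5
        have hlk : l ≠ k := (Finset.mem_erase.mp hl).1
        have hlK : l < K := Finset.mem_range.mp (Finset.mem_erase.mp hl).2
        have hpe : p k = p l :=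
          (Nat.prime_dvd_prime_iff_eq hprime (hp l hlK)).mp (hprime.dvd_of_dvd_pow hpl)
        exact hlk (hpinj l hlK k hk hpe.symm)
    have hXs : cyclotomic (p k ^ α) ℤ ∣ ((X : Polynomial ℤ) ^ s - 1) := by
      refine (cyclotomic.dvd_X_pow_sub_one (p k ^ α) ℤ).trans ?_
      obtain ⟨c, hc⟩ := hpow_dvd
      have h := sub_dvd_pow_sub_pow ((X : Polynomial ℤ) ^ (p k ^ α)) 1 c
      simpa [← pow_mul, ← hc, one_pow] using h
    have hF := fiberPoly_mul (p k) s hps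
    have hΦF : cyclotomic (p k ^ α) ℤ ∣ fiberPoly (p k) s := by
      have hd : cyclotomic (p k ^ α) ℤ ∣
          fiberPoly (p k) s * ((X : Polynomial ℤ) ^ (s / p k) - 1) := by rw [hF]; exact hXs
      rcases (cyclo_prime hq0).dvd_mul.mp hd with h | h
      · exact h
      · exact absurd h (cyclo_not_dvd_X_pow_sub_one hq0 hnot)
    exact hΦF.trans (fiber_dvd_mask hps hfibs)
  -- assemble the big product over all pairs (k, α)
  set T : Finset (ℕ × ℕ) :=
    (Finset.range K).biUnion (fun k => (expFin k).image (fun α => (k, α))) with hT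
  have hmemT : ∀ x : ℕ × ℕ, x ∈ T → x.1 < K ∧ x.2 ∈ expSet (SA2 A) p n σ x.1 := by
    intro x hx
    rw [hT, Finset.mem_biUnion] at hx
    obtain ⟨k, hk, hx⟩ := hx
    obtain ⟨α, hα, rfl⟩ := Finset.mem_image.mp hx
    exact ⟨Finset.mem_range.mp hk, (hmemE k α).mp hα⟩
  have hbig : (∏ x ∈ T, cyclotomic (p x.1 ^ x.2) ℤ) ∣ maskPoly A' := by
    refine prod_cyclotomic_dvd T (fun x => p x.1 ^ x.2) ?_ ?_ (maskPoly A') ?_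
    · intro x hx
      exact pow_pos (hp x.1 (hmemT x hx).1).pos _
    · intro x hx y hy he
      obtain ⟨hxK, hxE⟩ := hmemT x hx
      obtain ⟨hyK, hyE⟩ := hmemT y hy
      have he' : p x.1 ^ x.2 = p y.1 ^ y.2 := he
      have hdd : p x.1 ∣ p y.1 ^ y.2 := he' ▸ dvd_pow_self (p x.1) hxE.1.ne'
      have hpe : p x.1 = p y.1 :=
        (Nat.prime_dvd_prime_iff_eq (hp x.1 hxK) (hp y.1 hyK)).mp
          ((hp x.1 hxK).dvd_of_dvd_pow hdd)
      have h1 : x.1 = y.1 := hpinj _ hxK _ hyK hpe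
      rw [← hpe] at he'
      have h2 : x.2 = y.2 := Nat.pow_right_injective (hp x.1 hxK).two_le he'
      exact Prod.ext h1 h2
    · intro x hx
      exact key x.1 (hmemT x hx).1 x.2 (hmemT x hx).2
  have heval := Polynomial.eval_dvd (x := (1 : ℤ)) hbig
  have hmask : (maskPoly A').eval 1 = (A'.card : ℤ) := by
    simp [maskPoly, Polynomial.eval_finset_sum]
  have hdisj : Set.PairwiseDisjoint ↑(Finset.range K)
      (fun k => (expFin k).image (fun α => (k, α))) := by
    intro k _ l _ hkl
    refine Finset.disjoint_left.mpr ?_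
    rintro ⟨a, b⟩ hx hy
    obtain ⟨α, -, hα⟩ := Finset.mem_image.mp hx
    obtain ⟨β, -, hβ⟩ := Finset.mem_image.mp hy
    exact hkl ((congrArg Prod.fst hα).trans (congrArg Prod.fst hβ).symm)
  have hevalprod : (∏ x ∈ T, cyclotomic (p x.1 ^ x.2) ℤ).eval 1
      = (FIB (SA2 A) K p n σ : ℤ) := by
    rw [Polynomial.eval_prod]
    have hpe : ∀ x ∈ T, (cyclotomic (p x.1 ^ x.2) ℤ).eval 1 = (p x.1 : ℤ) := by
      intro x hx
      obtain ⟨hxK, hxE⟩ := hmemT x hx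
      haveI : Fact (p x.1).Prime := ⟨hp x.1 hxK⟩
      have h0 : 0 < x.2 := hxE.1
      have hxe : x.2 = (x.2 - 1) + 1 := by omega
      rw [hxe, eval_one_cyclotomic_prime_pow]
    rw [Finset.prod_congr rfl hpe, hT, Finset.prod_biUnion hdisj]
    have hone : ∀ k ∈ Finset.range K,
        (∏ x ∈ (expFin k).image (fun α => (k, α)), (p x.1 : ℤ))
          = (p k : ℤ) ^ (expSet (SA2 A) p n σ k).ncard := by
      intro k hk
      rw [Finset.prod_image (by
        intro a _ b _ h
        exact congrArg Prod.snd h)]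
      have hconst : (∏ x ∈ expFin k, ((p (k, x).1 : ℤ))) = ∏ _x ∈ expFin k, (p k : ℤ) := rfl
      rw [hconst, Finset.prod_const]
      congr 1
      rw [Set.ncard_eq_toFinset_card _ (hfin k)]
    rw [Finset.prod_congr rfl hone, FIB]
    push_cast
    rfl
  have hdvdZ : (FIB (SA2 A) K p n σ : ℤ) ∣ (A'.card : ℤ) := by
    rw [← hevalprod, ← hmask]; exact heval
  exact Nat.le_of_dvd (Finset.card_pos.mpr hne) (Int.natCast_dvd_natCast.mp hdvdZ)

end
end

section
/- Let δ > 0 and let 𝒜 ⊂ ℝ be a finite set satisfying ∫_ℝ (Σ_{α∈𝒜} 1_{[α−δ, α+δ]}(x))² dx ≤ S for some S > 0. Then there exists an absolute constant C > 0 such that for every ξ_0 ∈ ℝ and every choice of coefficients (c_α)_{α∈𝒜} ⊂ ℂ with |c_α| = 1 for all α: δ² ∫_{ξ_0}^{ξ_0 + δ^{−1}} |Σ_{α∈𝒜} c_α e^{iαξ}|² dξ ≤ C S. -/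
/-!
On the window `[ξ₀, ξ₀ + δ⁻¹]` the Gaussian `exp (-δ² (ξ - c)²)` centred at its midpoint is at least
`exp (-1/4)`, so the window integral of `|F|²`, `F ξ = ∑ c_α e^{iαξ}`, is dominated by the
Gaussian-weighted integral over `ℝ`. Expanding `|F|²` turns that into a sum over pairs `(α, β)` of
Fourier transforms of the Gaussian at `α - β`, each of size `O(δ⁻¹ / (1 + ((α - β) / δ)²))`.
Every pair with `α - β` within `δ` of a given `c` contributes at least `δ` to the correlation
`∫ f x * f (x - c) ≤ ∫ f²` of the counting function `f = ∑ 1_{[α-δ,α+δ]}`, so at most `S / δ`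
pairs have `α - β` in any interval of length `2δ`; summing over such intervals against the
weights `1 / (1 + m²)` gives `δ² ∫ |F|² = O(S)`.
-/

open MeasureTheory Filter Set
open scoped Real BigOperators

noncomputable section

open Finset Complex ComplexConjugate

theorem intervalIntegral_le_exp_mul_integral_gaussian_mul {f : ℝ → ℝ} {a L b : ℝ} (hL : 0 ≤ L)
    (hb : 0 ≤ b) (hf : ∀ x, 0 ≤ f x)
    (hwf : Integrable fun ξ => Real.exp (-b * (ξ - (a + L / 2)) ^ 2) * f ξ) :
    ∫ ξ in a..a + L, f ξ ≤
      Real.exp (b * L ^ 2 / 4) * ∫ ξ, Real.exp (-b * (ξ - (a + L / 2)) ^ 2) * f ξ := by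
  have hmajor : ∀ ξ ∈ Ioc a (a + L),
      f ξ ≤ Real.exp (b * L ^ 2 / 4) * (Real.exp (-b * (ξ - (a + L / 2)) ^ 2) * f ξ) := by
    rintro ξ ⟨h₁, h₂⟩
    have : 1 ≤ Real.exp (b * L ^ 2 / 4) * Real.exp (-b * (ξ - (a + L / 2)) ^ 2) := by
      rw [← Real.exp_add]
      have : (ξ - (a + L / 2)) ^ 2 ≤ L ^ 2 / 4 := by nlinarith
      exact Real.one_le_exp (by nlinarith)
    rw [← mul_assoc]
    exact le_mul_of_one_le_left (hf ξ) this
  have hint := hwf.const_mul (Real.exp (b * L ^ 2 / 4))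
  rw [intervalIntegral.integral_of_le (by linarith), ← integral_const_mul]
  calc ∫ ξ in Ioc a (a + L), f ξ
      ≤ ∫ ξ in Ioc a (a + L), Real.exp (b * L ^ 2 / 4) *
          (Real.exp (-b * (ξ - (a + L / 2)) ^ 2) * f ξ) :=
        integral_mono_of_nonneg (.of_forall hf) hint.integrableOn
          ((ae_restrict_mem measurableSet_Ioc).mono hmajor)
    _ ≤ _ := setIntegral_le_integral hint (.of_forall fun ξ => by positivity [hf ξ])

theorem norm_integral_gaussian_mul_cexp {b : ℝ} (hb : 0 < b) (c t : ℝ) :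
    ‖∫ ξ : ℝ, (Real.exp (-b * (ξ - c) ^ 2) : ℂ) * cexp (I * t * ξ)‖ =
      √(π / b) * Real.exp (-t ^ 2 / (4 * b)) := by
  have hshift : ∀ x : ℝ, (Real.exp (-b * (x + c - c) ^ 2) : ℂ) * cexp (I * t * (x + c : ℝ)) =
      cexp (I * t * c) * (cexp (I * t * x) * cexp (-b * x ^ 2)) := fun x => by
    rw [ofReal_exp, ← exp_add, ← exp_add, ← exp_add]
    congr 1
    push_cast
    ring
  rw [← integral_add_right_eq_self _ c]
  simp only [hshift]
  have hphase : ‖cexp (I * t * c)‖ = 1 := by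
    rw [show I * t * c = ((t * c : ℝ) : ℂ) * I by push_cast; ring, norm_exp_ofReal_mul_I]
  have hroot : ‖((π : ℂ) / b) ^ (1 / 2 : ℂ)‖ = √(π / b) := by
    rw [← ofReal_div, norm_cpow_eq_rpow_re_of_pos (by positivity), Real.sqrt_eq_rpow]
    norm_num
  have hdecay : ‖cexp (-(t : ℂ) ^ 2 / (4 * b))‖ = Real.exp (-t ^ 2 / (4 * b)) := by
    rw [show -(t : ℂ) ^ 2 / (4 * b) = ((-t ^ 2 / (4 * b) : ℝ) : ℂ) by push_cast; ring,
      norm_exp_ofReal]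
  rw [integral_const_mul, fourierIntegral_gaussian (by simpa using hb), norm_mul, norm_mul,
    hphase, hroot, hdecay, one_mul]

theorem norm_integral_gaussian_mul_cexp_le {δ : ℝ} (hδ : 0 < δ) (c t : ℝ) :
    ‖∫ ξ : ℝ, (Real.exp (-δ ^ 2 * (ξ - c) ^ 2) : ℂ) * cexp (I * t * ξ)‖ ≤
      4 * √π / δ * (1 / (1 + (t / δ) ^ 2)) := by
  rw [norm_integral_gaussian_mul_cexp (by positivity), Real.sqrt_div' _ (sq_nonneg δ),
    Real.sqrt_sq hδ.le]
  have hdecay : Real.exp (-t ^ 2 / (4 * δ ^ 2)) ≤ 4 / (1 + (t / δ) ^ 2) := by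
    have h := Real.add_one_le_exp ((t / δ) ^ 2 / 4)
    rw [show -t ^ 2 / (4 * δ ^ 2) = -((t / δ) ^ 2 / 4) by field_simp, Real.exp_neg,
      inv_le_iff_one_le_mul₀ (Real.exp_pos _), div_mul_eq_mul_div, le_div_iff₀ (by positivity)]
    nlinarith [sq_nonneg (t / δ)]
  calc √π / δ * Real.exp (-t ^ 2 / (4 * δ ^ 2)) ≤ √π / δ * (4 / (1 + (t / δ) ^ 2)) := by gcongr
    _ = _ := by ring

def expSum (𝒜 : Finset ℝ) (coef : ℝ → ℂ) (ξ : ℝ) : ℂ :=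
  ∑ α ∈ 𝒜, coef α * cexp (I * α * ξ)

namespace expSum

variable (𝒜 : Finset ℝ) (coef : ℝ → ℂ)

theorem continuous : Continuous (expSum 𝒜 coef) :=
  continuous_finsetSum _ fun _ _ => continuous_const.mul (by fun_prop)

theorem norm_le {coef : ℝ → ℂ} (hcoef : ∀ α ∈ 𝒜, ‖coef α‖ ≤ 1) (ξ : ℝ) :
    ‖expSum 𝒜 coef ξ‖ ≤ #𝒜 := by
  refine (norm_sum_le _ _).trans ?_
  rw [← nsmul_one, ← sum_const]
  refine sum_le_sum fun α hα => ?_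
  rw [norm_mul, show I * α * ξ = ((α * ξ : ℝ) : ℂ) * I by push_cast; ring, norm_exp_ofReal_mul_I,
    mul_one]
  exact hcoef α hα

theorem norm_sq_eq (ξ : ℝ) :
    ((‖expSum 𝒜 coef ξ‖ ^ 2 : ℝ) : ℂ) = ∑ p ∈ 𝒜 ×ˢ 𝒜,
      coef p.1 * conj (coef p.2) * cexp (I * ((p.1 - p.2 : ℝ) : ℂ) * ξ) := by
  rw [← normSq_eq_norm_sq, ← mul_conj, expSum, map_sum, sum_mul_sum, sum_product]
  refine sum_congr rfl fun α _ => sum_congr rfl fun β _ => ?_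
  rw [map_mul, ← exp_conj, mul_mul_mul_comm, ← exp_add]
  congr 2
  simp only [map_mul, conj_I, conj_ofReal]
  push_cast
  ring

theorem integral_mul_norm_sq_le (hcoef : ∀ α ∈ 𝒜, ‖coef α‖ ≤ 1) {w : ℝ → ℝ}
    (hw : Integrable w) :
    ∫ ξ, w ξ * ‖expSum 𝒜 coef ξ‖ ^ 2 ≤
      ∑ p ∈ 𝒜 ×ˢ 𝒜, ‖∫ ξ, (w ξ : ℂ) * cexp (I * ((p.1 - p.2 : ℝ) : ℂ) * ξ)‖ := by
  have hint : ∀ t : ℝ, Integrable fun ξ : ℝ => (w ξ : ℂ) * cexp (I * t * ξ) := fun t =>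
    hw.ofReal.mul_bdd (by fun_prop) (.of_forall fun ξ => by
      rw [show I * t * ξ = ((t * ξ : ℝ) : ℂ) * I by push_cast; ring, norm_exp_ofReal_mul_I])
  have hexpand : ((∫ ξ, w ξ * ‖expSum 𝒜 coef ξ‖ ^ 2 : ℝ) : ℂ) = ∑ p ∈ 𝒜 ×ˢ 𝒜,
      coef p.1 * conj (coef p.2) * ∫ ξ, (w ξ : ℂ) * cexp (I * ((p.1 - p.2 : ℝ) : ℂ) * ξ) := by
    rw [← integral_complex_ofReal]
    simp_rw [ofReal_mul, norm_sq_eq, mul_sum]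
    rw [integral_finsetSum _ fun p _ => ?_]
    · refine sum_congr rfl fun p _ => ?_
      rw [← integral_const_mul]
      congr 1
      ext ξ
      ring
    · simpa only [mul_left_comm] using (hint (p.1 - p.2)).const_mul (coef p.1 * conj (coef p.2))
  calc ∫ ξ, w ξ * ‖expSum 𝒜 coef ξ‖ ^ 2
      ≤ ‖((∫ ξ, w ξ * ‖expSum 𝒜 coef ξ‖ ^ 2 : ℝ) : ℂ)‖ := by
        rw [norm_real]; exact Real.le_norm_self _
    _ ≤ ∑ p ∈ 𝒜 ×ˢ 𝒜,
        ‖coef p.1 * conj (coef p.2) * ∫ ξ, (w ξ : ℂ) * cexp (I * ((p.1 - p.2 : ℝ) : ℂ) * ξ)‖ :=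
        hexpand ▸ norm_sum_le _ _
    _ ≤ _ := by
        refine sum_le_sum fun p hp => ?_
        obtain ⟨h₁, h₂⟩ := mem_product.1 hp
        rw [norm_mul, norm_mul, RCLike.norm_conj]
        exact mul_le_of_le_one_left (norm_nonneg _)
          (mul_le_one₀ (hcoef _ h₁) (norm_nonneg _) (hcoef _ h₂))

end expSum

section RightInvariant

variable {G : Type*} [MeasurableSpace G] [AddGroup G] [MeasurableAdd G] {μ : Measure G}
  [μ.IsAddRightInvariant]

theorem integral_mul_comp_sub_le_integral_sq {f : G → ℝ} (hf : MemLp f 2 μ) (c : G) :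
    ∫ x, f x * f (x - c) ∂μ ≤ ∫ x, f x ^ 2 ∂μ := by
  have hfc : MemLp (fun x => f (x - c)) 2 μ :=
    hf.comp_measurePreserving (measurePreserving_sub_right μ c)
  calc ∫ x, f x * f (x - c) ∂μ ≤ ∫ x, (f x ^ 2 + f (x - c) ^ 2) / 2 ∂μ :=
        integral_mono (hf.integrable_mul hfc) ((hf.integrable_sq.add hfc.integrable_sq).div_const 2)
          fun x => by nlinarith [sq_nonneg (f x - f (x - c))]
    _ = ∫ x, f x ^ 2 ∂μ := by
        rw [integral_div, integral_add hf.integrable_sq hfc.integrable_sq,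
          integral_sub_right_eq_self (fun x => f x ^ 2) c]
        ring

end RightInvariant

theorem memLp_indicator_Icc_one (p : ENNReal) (a b : ℝ) :
    MemLp ((Icc a b).indicator fun _ => (1 : ℝ)) p :=
  memLp_indicator_const p measurableSet_Icc 1 (.inr measure_Icc_lt_top.ne)

theorem le_integral_indicator_Icc_mul_comp_sub {a b c δ : ℝ} (h : |a - b - c| ≤ δ) :
    δ ≤ ∫ x, (Icc (a - δ) (a + δ)).indicator (fun _ => (1 : ℝ)) x *
      (Icc (b - δ) (b + δ)).indicator (fun _ => (1 : ℝ)) (x - c) := by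
  obtain ⟨m, hm⟩ : ∃ m, m = (a + b + c) / 2 := ⟨_, rfl⟩
  obtain ⟨h₁, h₂⟩ := abs_le.1 h
  have hmid : (Icc (m - δ / 2) (m + δ / 2)).indicator (fun _ => (1 : ℝ)) ≤ fun x =>
      (Icc (a - δ) (a + δ)).indicator (fun _ => (1 : ℝ)) x *
        (Icc (b - δ) (b + δ)).indicator (fun _ => (1 : ℝ)) (x - c) := by
    intro x
    by_cases hx : x ∈ Icc (m - δ / 2) (m + δ / 2)
    · obtain ⟨hx₁, hx₂⟩ := hx
      have ha : x ∈ Icc (a - δ) (a + δ) := ⟨by linarith, by linarith⟩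
      have hb : x - c ∈ Icc (b - δ) (b + δ) := ⟨by linarith, by linarith⟩
      simp [ha, hb, hx₁, hx₂]
    · rw [indicator_of_notMem hx]
      exact mul_nonneg (indicator_nonneg (fun _ _ => zero_le_one) _)
        (indicator_nonneg (fun _ _ => zero_le_one) _)
  have hint := (memLp_indicator_Icc_one 2 (a - δ) (a + δ)).integrable_mul
    ((memLp_indicator_Icc_one 2 (b - δ) (b + δ)).comp_measurePreserving
      (measurePreserving_sub_right volume c))
  calc δ = ∫ x, (Icc (m - δ / 2) (m + δ / 2)).indicator (fun _ => (1 : ℝ)) x := by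
        rw [integral_indicator_const _ measurableSet_Icc, Real.volume_real_Icc, smul_eq_mul,
          mul_one, max_eq_left (by linarith)]
        ring
    _ ≤ _ := integral_mono_of_nonneg
        (.of_forall fun _ => indicator_nonneg (fun _ _ => zero_le_one) _) hint (.of_forall hmid)

theorem mul_card_pairs_near_le_integral_sq (δ c : ℝ) (𝒜 : Finset ℝ) :
    δ * #{p ∈ 𝒜 ×ˢ 𝒜 | |p.1 - p.2 - c| ≤ δ} ≤
      ∫ x, (∑ α ∈ 𝒜, (Icc (α - δ) (α + δ)).indicator (fun _ => (1 : ℝ)) x) ^ 2 := by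
  set box : ℝ → ℝ → ℝ := fun α => (Icc (α - δ) (α + δ)).indicator fun _ => 1
  have hbox : ∀ α, MemLp (box α) 2 := fun α => memLp_indicator_Icc_one 2 _ _
  have hf : MemLp (fun x => ∑ α ∈ 𝒜, box α x) 2 := memLp_finsetSum 𝒜 fun α _ => hbox α
  have hpair : ∀ p : ℝ × ℝ, Integrable fun x => box p.1 x * box p.2 (x - c) := fun p =>
    (hbox p.1).integrable_mul
      ((hbox p.2).comp_measurePreserving (measurePreserving_sub_right volume c))
  calc δ * #{p ∈ 𝒜 ×ˢ 𝒜 | |p.1 - p.2 - c| ≤ δ}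
      = ∑ p ∈ 𝒜 ×ˢ 𝒜 with |p.1 - p.2 - c| ≤ δ, δ := by rw [sum_const, nsmul_eq_mul, mul_comm]
    _ ≤ ∑ p ∈ 𝒜 ×ˢ 𝒜 with |p.1 - p.2 - c| ≤ δ, ∫ x, box p.1 x * box p.2 (x - c) :=
        sum_le_sum fun p hp => le_integral_indicator_Icc_mul_comp_sub (mem_filter.1 hp).2
    _ ≤ ∑ p ∈ 𝒜 ×ˢ 𝒜, ∫ x, box p.1 x * box p.2 (x - c) :=
        sum_le_sum_of_subset_of_nonneg (filter_subset _ _) fun p _ _ =>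
          integral_nonneg fun x => mul_nonneg (indicator_nonneg (fun _ _ => zero_le_one) _)
            (indicator_nonneg (fun _ _ => zero_le_one) _)
    _ = ∫ x, (∑ α ∈ 𝒜, box α x) * ∑ α ∈ 𝒜, box α (x - c) := by
        rw [← integral_finsetSum _ fun p _ => hpair p]
        simp_rw [sum_mul_sum, sum_product]
    _ ≤ ∫ x, (∑ α ∈ 𝒜, box α x) ^ 2 := integral_mul_comp_sub_le_integral_sq hf c

theorem summable_one_div_one_add_sq : Summable fun m : ℤ => 1 / (1 + (m : ℝ) ^ 2) := by
  refine (Real.summable_one_div_int_pow.mpr one_lt_two).of_norm_bounded_eventually ?_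
  refine (finite_singleton 0).subset fun m hm => ?_
  by_contra hm0
  have : (0 : ℝ) < (m : ℝ) ^ 2 := by
    have : (m : ℝ) ≠ 0 := by exact_mod_cast hm0
    positivity
  refine hm ?_
  change ‖1 / (1 + (m : ℝ) ^ 2)‖ ≤ 1 / (m : ℝ) ^ 2
  rw [Real.norm_of_nonneg (by positivity)]
  gcongr
  linarith

theorem one_div_one_add_sq_div_le {t δ : ℝ} {m : ℤ} (hδ : 0 < δ) (h : |t - 2 * δ * m| ≤ δ) :
    1 / (1 + (t / δ) ^ 2) ≤ 1 / (1 + (m : ℝ) ^ 2) := by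
  have hm : (m : ℝ) ^ 2 ≤ (t / δ) ^ 2 := by
    rcases eq_or_ne m 0 with rfl | hm0
    · simp [sq_nonneg]
    have h1 : (1 : ℝ) ≤ |(m : ℝ)| := by exact_mod_cast Int.one_le_abs hm0
    have h2 : |t / δ - 2 * m| ≤ 1 := by
      rw [show t / δ - 2 * m = (t - 2 * δ * m) / δ by field_simp, abs_div, abs_of_pos hδ,
        div_le_one hδ]
      exact h
    rw [← sq_abs (t / δ), ← sq_abs (m : ℝ)]
    have := abs_sub_abs_le_abs_sub (2 * (m : ℝ)) (t / δ)
    rw [abs_sub_comm, abs_mul, abs_two] at this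
    exact pow_le_pow_left₀ (abs_nonneg _) (by linarith) 2
  gcongr

/-- Rounding `t p / 2δ` sorts the points into intervals of length `2δ`; the `m`-th one holds at most
`N` of them, each of weight at most `1 / (1 + m²)`. -/
theorem sum_one_div_one_add_sq_div_le {ι : Type*} (P : Finset ι) (t : ι → ℝ) {δ N : ℝ}
    (hδ : 0 < δ) (hN : ∀ c, (#{p ∈ P | |t p - c| ≤ δ} : ℝ) ≤ N) :
    ∑ p ∈ P, 1 / (1 + (t p / δ) ^ 2) ≤ N * ∑' m : ℤ, 1 / (1 + (m : ℝ) ^ 2) := by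
  classical
  set bucket : ι → ℤ := fun p => round (t p / (2 * δ))
  have hbucket : ∀ p, |t p - 2 * δ * bucket p| ≤ δ := fun p => by
    have := abs_sub_round (t p / (2 * δ))
    rw [show t p - 2 * δ * bucket p = 2 * δ * (t p / (2 * δ) - bucket p) by field_simp,
      abs_mul, abs_of_pos (by positivity)]
    nlinarith
  have hN0 : 0 ≤ N := le_trans (Nat.cast_nonneg _) (hN 0)
  calc ∑ p ∈ P, 1 / (1 + (t p / δ) ^ 2)
      ≤ ∑ p ∈ P, 1 / (1 + ((bucket p : ℤ) : ℝ) ^ 2) :=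
        sum_le_sum fun p _ => one_div_one_add_sq_div_le hδ (hbucket p)
    _ = ∑ m ∈ P.image bucket, #{p ∈ P | bucket p = m} • (1 / (1 + (m : ℝ) ^ 2)) :=
        sum_comp (fun m : ℤ => 1 / (1 + (m : ℝ) ^ 2)) bucket
    _ ≤ ∑ m ∈ P.image bucket, N * (1 / (1 + (m : ℝ) ^ 2)) := by
        refine sum_le_sum fun m _ => ?_
        rw [nsmul_eq_mul]
        gcongr
        refine le_trans ?_ (hN (2 * δ * m))
        gcongr
        rintro rfl
        exact hbucket p
    _ ≤ N * ∑' m : ℤ, 1 / (1 + (m : ℝ) ^ 2) := by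
        rw [← mul_sum]
        exact mul_le_mul_of_nonneg_left
          (summable_one_div_one_add_sq.sum_le_tsum _ fun _ _ => by positivity) hN0

/-- **Poisson localization (Bond–Volberg)**: there is an absolute constant `C > 0` such
that if `𝒜 ⊆ ℝ` is finite and `∫ (∑_{α∈𝒜} 1_{[α-δ,α+δ]})² ≤ S`, then for every `ξ₀ ∈ ℝ`
and every choice of unimodular coefficients `c_α`,
`δ² ∫_{ξ₀}^{ξ₀+δ⁻¹} |∑_{α∈𝒜} c_α e^{iαξ}|² dξ ≤ C S`. -/
theorem poisson_localization_exponential_sum :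
    ∃ C : ℝ, 0 < C ∧
      ∀ (δ : ℝ), 0 < δ → ∀ (𝒜 : Finset ℝ) (S : ℝ), 0 < S →
        (∫ x : ℝ, (∑ α ∈ 𝒜, Set.indicator (Set.Icc (α - δ) (α + δ)) (fun _ => (1 : ℝ)) x) ^ 2)
          ≤ S →
        ∀ (ξ₀ : ℝ) (coef : ℝ → ℂ), (∀ α ∈ 𝒜, ‖coef α‖ = 1) →
          δ ^ 2 * (∫ ξ in ξ₀..(ξ₀ + δ⁻¹),
              ‖∑ α ∈ 𝒜, coef α * Complex.exp (Complex.I * (α : ℂ) * (ξ : ℂ))‖ ^ 2)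
            ≤ C * S := by
  set Z := ∑' m : ℤ, 1 / (1 + (m : ℝ) ^ 2)
  have hZ : 0 < Z := summable_one_div_one_add_sq.tsum_pos (fun _ => by positivity) 0 (by norm_num)
  refine ⟨4 * √π * Real.exp (1 / 4) * Z, by positivity, fun δ hδ 𝒜 S _ hS ξ₀ coef hcoef => ?_⟩
  have hcoef' : ∀ α ∈ 𝒜, ‖coef α‖ ≤ 1 := fun α hα => (hcoef α hα).le
  set c := ξ₀ + δ⁻¹ / 2
  have hw : Integrable fun ξ => Real.exp (-δ ^ 2 * (ξ - c) ^ 2) :=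
    (integrable_exp_neg_mul_sq (by positivity)).comp_sub_right c
  have hwF : Integrable fun ξ => Real.exp (-δ ^ 2 * (ξ - c) ^ 2) * ‖expSum 𝒜 coef ξ‖ ^ 2 :=
    hw.mul_bdd ((expSum.continuous 𝒜 coef).norm.pow 2).aestronglyMeasurable
      (.of_forall fun ξ => by
        rw [norm_pow, norm_norm]
        exact pow_le_pow_left₀ (norm_nonneg _) (expSum.norm_le 𝒜 hcoef' ξ) 2)
  have hwindow := intervalIntegral_le_exp_mul_integral_gaussian_mul (inv_nonneg.2 hδ.le)
    (sq_nonneg δ) (fun _ => sq_nonneg _) hwF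
  rw [show δ ^ 2 * δ⁻¹ ^ 2 / 4 = 1 / 4 by field_simp] at hwindow
  have hcount : ∑ p ∈ 𝒜 ×ˢ 𝒜, 1 / (1 + ((p.1 - p.2) / δ) ^ 2) ≤ S / δ * Z :=
    sum_one_div_one_add_sq_div_le _ _ hδ fun c => by
      rw [le_div_iff₀' hδ]
      exact (mul_card_pairs_near_le_integral_sq δ c 𝒜).trans hS
  calc δ ^ 2 * ∫ ξ in ξ₀..ξ₀ + δ⁻¹, ‖expSum 𝒜 coef ξ‖ ^ 2
      ≤ δ ^ 2 * (Real.exp (1 / 4) *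
          ∑ p ∈ 𝒜 ×ˢ 𝒜, 4 * √π / δ * (1 / (1 + ((p.1 - p.2) / δ) ^ 2))) := by
        refine mul_le_mul_of_nonneg_left (hwindow.trans (mul_le_mul_of_nonneg_left
          ((expSum.integral_mul_norm_sq_le 𝒜 coef hcoef' hw).trans
            (sum_le_sum fun p _ => ?_)) (Real.exp_pos _).le)) (sq_nonneg δ)
        exact_mod_cast norm_integral_gaussian_mul_cexp_le hδ c (p.1 - p.2)
    _ = 4 * √π * Real.exp (1 / 4) * δ * ∑ p ∈ 𝒜 ×ˢ 𝒜, 1 / (1 + ((p.1 - p.2) / δ) ^ 2) := by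
        rw [← mul_sum]
        field_simp
    _ ≤ 4 * √π * Real.exp (1 / 4) * δ * (S / δ * Z) := by gcongr
    _ = 4 * √π * Real.exp (1 / 4) * Z * S := by
        field_simp

end
end

section
/- Let A ⊆ ℕ be finite, let 𝒞 = {s_1,...,s_I} ⊆ S_A^{(2)} be a cluster, put N = lcm(s_1,...,s_I), and suppose N = QU where s_j ∤ Q for every j ∈ {1,...,I}. Write s_j = r_j t_j with r_j = gcd(s_j, Q) and t_j = s_j/r_j, and set T = max(t_1,...,t_I). For 0 < ρ < (QT)^{−1}, let Γ := Γ(𝒞,ρ) = {ξ ∈ ℝ : dist(ξ, Q^{−1}ℤ) < ρ/2}. Then: (a) dist(Γ − Γ, Σ(𝒞)) > 0; (b) for each 0 < λ < T^{−1} there is a choice of 0 < ρ < (QT)^{−1} such that H^1([0,1] ∩ Γ) > λ; and (c) the resulting set Γ is 1-periodic. -/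
open MeasureTheory Filter Set Polynomial
open scoped ENNReal Real BigOperators

noncomputable section

/-- `Γ(𝒞, ρ) = {ξ ∈ ℝ : dist(ξ, Q⁻¹ℤ) < ρ/2}`. -/
def GammaQ (Q : ℕ) (ρ : ℝ) : Set ℝ := {ξ | ∃ z : ℤ, |ξ - (z : ℝ) / (Q : ℝ)| < ρ / 2}

/-- `Σ(𝒞) = {ξ ∈ ℝ : Φ_s(e^{2πiξ}) = 0 for some s ∈ 𝒞}`. -/
def SigmaCluster (𝒞 : Finset ℕ) : Set ℝ :=
  {ξ | ∃ s ∈ 𝒞, Polynomial.eval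
    (Complex.exp (2 * (Real.pi : ℂ) * Complex.I * (ξ : ℂ))) (Polynomial.cyclotomic s ℂ) = 0}

/-- Key distance bound: any point of `Σ(𝒞)` is at distance ≥ 1/(QT) from `Q⁻¹ℤ`. -/
lemma sigma_dist_aux (𝒞 : Finset ℕ) (Q T : ℕ) (hQ : 0 < Q)
    (hpos : ∀ s ∈ 𝒞, 0 < s) (hndvd : ∀ s ∈ 𝒞, ¬ s ∣ Q)
    (hTs : ∀ s ∈ 𝒞, s / Nat.gcd s Q ≤ T)
    (w : ℝ) (hw : w ∈ SigmaCluster 𝒞) (m : ℤ) :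
    ((Q : ℝ) * T)⁻¹ ≤ |w - (m : ℝ) / Q| := by
  obtain ⟨s, hs𝒞, hroot⟩ := hw
  have hspos : 0 < s := hpos s hs𝒞
  haveI : NeZero ((s : ℂ)) := ⟨Nat.cast_ne_zero.mpr hspos.ne'⟩
  have hprim : IsPrimitiveRoot (Complex.exp (2 * (Real.pi : ℂ) * Complex.I * (w : ℂ))) s :=
    Polynomial.isRoot_cyclotomic_iff.mp hroot
  have h1 : Complex.exp ((s : ℂ) * (2 * (Real.pi : ℂ) * Complex.I * (w : ℂ))) = 1 := by
    rw [Complex.exp_nat_mul]; exact hprim.pow_eq_one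
  obtain ⟨n, hn⟩ := Complex.exp_eq_one_iff.mp h1
  have h2pi : (2 * (Real.pi : ℂ) * Complex.I) ≠ 0 :=
    mul_ne_zero (mul_ne_zero two_ne_zero (Complex.ofReal_ne_zero.mpr Real.pi_ne_zero))
      Complex.I_ne_zero
  have h2 : ((s : ℂ) * w - n) * (2 * (Real.pi : ℂ) * Complex.I) = 0 := by
    linear_combination hn
  have h3 : (s : ℂ) * (w : ℂ) = (n : ℂ) := by
    rcases mul_eq_zero.mp h2 with h | h
    · exact sub_eq_zero.mp h
    · exact absurd h h2pi
  have hsw : (s : ℝ) * w = (n : ℝ) := by exact_mod_cast h3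
  have hQR : (0 : ℝ) < Q := Nat.cast_pos.mpr hQ
  have hsR : (0 : ℝ) < s := Nat.cast_pos.mpr hspos
  set r : ℕ := Nat.gcd s Q with hr
  set t : ℕ := s / r with ht
  have hrpos : 0 < r := Nat.gcd_pos_of_pos_left Q hspos
  have hrs : r ∣ s := Nat.gcd_dvd_left s Q
  have hrt : r * t = s := Nat.mul_div_cancel' hrs
  have htT : t ≤ T := hTs s hs𝒞
  have htpos : 0 < t := by
    rcases Nat.eq_zero_or_pos t with h | h
    · exfalso; rw [h, Nat.mul_zero] at hrt; omega
    · exact h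
  have hTpos : 0 < T := lt_of_lt_of_le htpos htT
  have hTR : (0 : ℝ) < T := Nat.cast_pos.mpr hTpos
  have hsrT : (s : ℝ) ≤ (r : ℝ) * T := by
    have : s ≤ r * T := hrt ▸ Nat.mul_le_mul_left r htT
    exact_mod_cast this
  set D : ℤ := n * Q - m * s with hD
  have hDne : D ≠ 0 := by
    intro h0
    have hnQ : (n : ℤ) * Q = m * s := by omega
    have hc : (n : ℝ) * Q = (m : ℝ) * s := by exact_mod_cast hnQ
    have hQw : (Q : ℝ) * w = (m : ℝ) := by
      apply mul_left_cancel₀ hsR.ne'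
      calc (s : ℝ) * ((Q : ℝ) * w) = (Q : ℝ) * ((s : ℝ) * w) := by ring
        _ = (Q : ℝ) * n := by rw [hsw]
        _ = (s : ℝ) * m := by linarith
    have hQwC : (Q : ℂ) * (w : ℂ) = (m : ℂ) := by exact_mod_cast hQw
    have hζQ : Complex.exp (2 * (Real.pi : ℂ) * Complex.I * (w : ℂ)) ^ Q = 1 := by
      rw [← Complex.exp_nat_mul]
      have e : (Q : ℂ) * (2 * (Real.pi : ℂ) * Complex.I * (w : ℂ))
          = (m : ℂ) * (2 * (Real.pi : ℂ) * Complex.I) := by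
        linear_combination (2 * (Real.pi : ℂ) * Complex.I) * hQwC
      rw [e]; exact Complex.exp_int_mul_two_pi_mul_I m
    exact hndvd s hs𝒞 (hprim.dvd_of_pow_eq_one Q hζQ)
  have hrD : (r : ℤ) ∣ D := by
    have h1' : (r : ℤ) ∣ (Q : ℤ) := Int.natCast_dvd_natCast.mpr (Nat.gcd_dvd_right s Q)
    have h2' : (r : ℤ) ∣ (s : ℤ) := Int.natCast_dvd_natCast.mpr hrs
    exact dvd_sub (h1'.mul_left n) (h2'.mul_left m)
  have hrleD : (r : ℤ) ≤ |D| := Int.le_of_dvd (abs_pos.mpr hDne) ((dvd_abs _ _).mpr hrD)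
  have hrleDR : (r : ℝ) ≤ |((D : ℤ) : ℝ)| := by
    rw [← Int.cast_abs]; exact_mod_cast hrleD
  have hw_eq : w = (n : ℝ) / s := by
    rw [eq_div_iff hsR.ne']; linarith
  have h5 : w - (m : ℝ) / Q = ((D : ℤ) : ℝ) / ((s : ℝ) * Q) := by
    rw [hw_eq, hD]; push_cast; field_simp
  rw [h5, abs_div, abs_of_pos (by positivity : (0 : ℝ) < (s : ℝ) * Q)]
  rw [inv_eq_one_div, div_le_div_iff₀ (by positivity) (by positivity)]
  nlinarith [mul_le_mul_of_nonneg_right hsrT hQR.le,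
    mul_le_mul_of_nonneg_right hrleDR (by positivity : (0 : ℝ) ≤ (Q : ℝ) * T)]

/-- Lower bound for the measure of `[0,1] ∩ Γ(𝒞,ρ)`. -/
lemma gamma_vol_aux (Q : ℕ) (hQ : 0 < Q) (ρ : ℝ) (hρ0 : 0 < ρ) (hρQ : ρ ≤ 1 / (Q : ℝ)) :
    ENNReal.ofReal ((Q : ℝ) * ρ) ≤ volume (Set.Icc (0 : ℝ) 1 ∩ GammaQ Q ρ) := by
  have hQR : (0 : ℝ) < Q := Nat.cast_pos.mpr hQ
  have h1Qpos : (0 : ℝ) < 1 / Q := by positivity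
  set C : ℕ → Set ℝ := fun k =>
    Ioo ((k : ℝ)/Q) ((k : ℝ)/Q + ρ/2) ∪ Ioc (((k : ℝ)+1)/Q - ρ/2) (((k : ℝ)+1)/Q) with hC
  have hmeas : ∀ k, MeasurableSet (C k) := fun k => measurableSet_Ioo.union measurableSet_Ioc
  have hgap : ∀ k : ℕ, (k : ℝ)/Q + ρ/2 ≤ ((k : ℝ)+1)/Q - ρ/2 := by
    intro k
    have e : ((k : ℝ)+1)/Q = (k : ℝ)/Q + 1/Q := by ring
    rw [e]; linarith
  have hsubIoc : ∀ k : ℕ, C k ⊆ Ioc ((k : ℝ)/Q) (((k : ℝ)+1)/Q) := by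
    intro k x hx
    rcases hx with hx | hx
    · exact ⟨hx.1, by linarith [hx.2, hgap k, hρ0]⟩
    · exact ⟨by linarith [hx.1, hgap k, hρ0], hx.2⟩
  have hdisj : (↑(Finset.range Q) : Set ℕ).PairwiseDisjoint C := by
    intro i _ j _ hij
    refine Set.disjoint_of_subset (hsubIoc i) (hsubIoc j) ?_
    rw [Set.Ioc_disjoint_Ioc]
    rcases hij.lt_or_gt with h | h
    · have hij' : ((i : ℝ)+1)/Q ≤ (j : ℝ)/Q := by
        gcongr
        have : (i : ℝ) + 1 ≤ j := by exact_mod_cast h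
        linarith
      exact le_trans (min_le_left _ _) (le_trans hij' (le_max_right _ _))
    · have hij' : ((j : ℝ)+1)/Q ≤ (i : ℝ)/Q := by
        gcongr
        have : (j : ℝ) + 1 ≤ i := by exact_mod_cast h
        linarith
      exact le_trans (min_le_right _ _) (le_trans hij' (le_max_left _ _))
  have hvol : ∀ k : ℕ, volume (C k) = ENNReal.ofReal ρ := by
    intro k
    have hd : Disjoint (Ioo ((k : ℝ)/Q) ((k : ℝ)/Q + ρ/2))
        (Ioc (((k : ℝ)+1)/Q - ρ/2) (((k : ℝ)+1)/Q)) := by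
      apply Set.disjoint_left.mpr
      intro x hx1 hx2
      have := hgap k
      have := hx1.2
      have := hx2.1
      linarith
    show volume (Ioo ((k : ℝ)/Q) ((k : ℝ)/Q + ρ/2)
        ∪ Ioc (((k : ℝ)+1)/Q - ρ/2) (((k : ℝ)+1)/Q)) = ENNReal.ofReal ρ
    rw [measure_union hd measurableSet_Ioc, Real.volume_Ioo, Real.volume_Ioc]
    have e1 : (k : ℝ)/Q + ρ/2 - (k : ℝ)/Q = ρ/2 := by ring
    have e2 : ((k : ℝ)+1)/Q - (((k : ℝ)+1)/Q - ρ/2) = ρ/2 := by ring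
    rw [e1, e2, ← ENNReal.ofReal_add (by linarith) (by linarith)]
    norm_num
  have hsub : (⋃ k ∈ Finset.range Q, C k) ⊆ Set.Icc (0 : ℝ) 1 ∩ GammaQ Q ρ := by
    intro x hx
    simp only [Set.mem_iUnion, exists_prop] at hx
    obtain ⟨k, hk, hx⟩ := hx
    have hkQ : (k : ℝ) + 1 ≤ Q := by exact_mod_cast Finset.mem_range.mp hk
    have h0k : (0 : ℝ) ≤ (k : ℝ)/Q := by positivity
    have hk1 : ((k : ℝ)+1)/Q ≤ 1 := by rw [div_le_one hQR]; exact hkQ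
    have h1Qk : (1 : ℝ)/Q ≤ ((k : ℝ)+1)/Q := by
      gcongr
      linarith [Nat.cast_nonneg (α := ℝ) k]
    have ekk : (k : ℝ)/Q = ((k : ℝ)+1)/Q - 1/Q := by ring
    rcases hx with hx | hx
    · refine ⟨⟨by linarith [hx.1], by linarith [hx.2, hk1, hρQ]⟩, ⟨(k : ℤ), ?_⟩⟩
      push_cast
      rw [abs_lt]
      exact ⟨by linarith [hx.1, hρ0], by linarith [hx.2]⟩
    · refine ⟨⟨by linarith [hx.1, h1Qk, hρQ], le_trans hx.2 hk1⟩, ⟨(k : ℤ) + 1, ?_⟩⟩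
      push_cast
      rw [abs_lt]
      exact ⟨by linarith [hx.1], by linarith [hx.2, hρ0]⟩
  calc ENNReal.ofReal ((Q : ℝ) * ρ)
      = (Q : ℝ≥0∞) * ENNReal.ofReal ρ := by
        rw [ENNReal.ofReal_mul hQR.le, ENNReal.ofReal_natCast]
    _ = ∑ k ∈ Finset.range Q, volume (C k) := by
        simp [hvol, Finset.sum_const, nsmul_eq_mul]
    _ = volume (⋃ k ∈ Finset.range Q, C k) :=
        (measure_biUnion_finset hdisj (fun k _ => hmeas k)).symm
    _ ≤ volume (Set.Icc (0 : ℝ) 1 ∩ GammaQ Q ρ) := measure_mono hsub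

/-- **Single-cluster SLV set**: let `𝒞 = {s_1,…,s_I} ⊆ S_A^{(2)}` be a cluster with
`lcm(𝒞) = QU` where no `s_j` divides `Q`, and `T = max_j s_j / gcd(s_j, Q)`.  Then for
`0 < ρ < (QT)⁻¹` the set `Γ(𝒞,ρ) = {ξ : dist(ξ, Q⁻¹ℤ) < ρ/2}` satisfies
`dist(Γ - Γ, Σ(𝒞)) > 0` and is `1`-periodic, and for each `0 < λ < T⁻¹` some choice of
`0 < ρ < (QT)⁻¹` gives `H^1([0,1] ∩ Γ) > λ`. -/
theorem cluster_SLV_set (A 𝒞 : Finset ℕ) (h𝒞 : ↑𝒞 ⊆ SA2 A) (h𝒞ne : 𝒞.Nonempty)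
    (Q U : ℕ) (hQ : 0 < Q) (hQU : 𝒞.lcm id = Q * U) (hndvd : ∀ s ∈ 𝒞, ¬ s ∣ Q)
    (T : ℕ) (hT : T = 𝒞.sup fun s => s / Nat.gcd s Q) :
    (∀ ρ : ℝ, 0 < ρ → ρ < ((Q : ℝ) * (T : ℝ))⁻¹ →
      (∃ ε : ℝ, 0 < ε ∧
        ∀ x ∈ GammaQ Q ρ, ∀ y ∈ GammaQ Q ρ, ∀ w ∈ SigmaCluster 𝒞, ε ≤ |x - y - w|) ∧
      (∀ x : ℝ, x ∈ GammaQ Q ρ ↔ x + 1 ∈ GammaQ Q ρ)) ∧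
    (∀ lam : ℝ, 0 < lam → lam < (T : ℝ)⁻¹ →
      ∃ ρ : ℝ, 0 < ρ ∧ ρ < ((Q : ℝ) * (T : ℝ))⁻¹ ∧
        ENNReal.ofReal lam < volume (Set.Icc (0 : ℝ) 1 ∩ GammaQ Q ρ)) := by
  have hpos : ∀ s ∈ 𝒞, 0 < s := fun s hs => (h𝒞 hs).1
  have hTs : ∀ s ∈ 𝒞, s / Nat.gcd s Q ≤ T := fun s hs =>
    hT ▸ Finset.le_sup (f := fun s => s / Nat.gcd s Q) hs
  have hT1 : 1 ≤ T := by
    obtain ⟨s, hs⟩ := h𝒞ne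
    have hspos : 0 < s := hpos s hs
    have hg : 0 < Nat.gcd s Q := Nat.gcd_pos_of_pos_left Q hspos
    have h1 : 1 ≤ s / Nat.gcd s Q :=
      (Nat.one_le_div_iff hg).mpr (Nat.le_of_dvd hspos (Nat.gcd_dvd_left s Q))
    exact le_trans h1 (hTs s hs)
  have hQR : (0 : ℝ) < Q := Nat.cast_pos.mpr hQ
  have hTR : (0 : ℝ) < T := Nat.cast_pos.mpr hT1
  have hTR1 : (1 : ℝ) ≤ T := by exact_mod_cast hT1
  constructor
  · intro ρ hρ0 hρ
    constructor
    · refine ⟨((Q : ℝ) * T)⁻¹ - ρ, by linarith, ?_⟩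
      intro x hx y hy w hw
      obtain ⟨z₁, hz₁⟩ := hx
      obtain ⟨z₂, hz₂⟩ := hy
      have key : ((Q : ℝ) * T)⁻¹ ≤ |w - ((z₁ - z₂ : ℤ) : ℝ) / Q| :=
        sigma_dist_aux 𝒞 Q T hQ hpos hndvd hTs w hw (z₁ - z₂)
      have e : w - ((z₁ - z₂ : ℤ) : ℝ) / Q
          = (x - (z₁ : ℝ)/Q) - (y - (z₂ : ℝ)/Q) - (x - y - w) := by
        push_cast; ring
      have tri1 : |w - ((z₁ - z₂ : ℤ) : ℝ) / Q|
          ≤ |(x - (z₁ : ℝ)/Q) - (y - (z₂ : ℝ)/Q)| + |x - y - w| := by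
        rw [e]; exact abs_sub _ _
      have tri2 : |(x - (z₁ : ℝ)/Q) - (y - (z₂ : ℝ)/Q)|
          ≤ |x - (z₁ : ℝ)/Q| + |y - (z₂ : ℝ)/Q| := abs_sub _ _
      linarith
    · intro x
      constructor
      · rintro ⟨z, hz⟩
        refine ⟨z + Q, ?_⟩
        have e : x + 1 - ((z + (Q : ℤ) : ℤ) : ℝ)/Q = x - (z : ℝ)/Q := by
          push_cast; rw [add_div, div_self hQR.ne']; ring
        rw [e]; exact hz
      · rintro ⟨z, hz⟩
        refine ⟨z - Q, ?_⟩
        have e : x - ((z - (Q : ℤ) : ℤ) : ℝ)/Q = x + 1 - (z : ℝ)/Q := by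
          push_cast; rw [sub_div, div_self hQR.ne']; ring
        rw [e]; exact hz
  · intro lam hlam0 hlam
    have hlT : lam * T < 1 := by
      have := mul_lt_mul_of_pos_right hlam hTR
      rwa [inv_mul_cancel₀ hTR.ne'] at this
    have hkey : lam / Q < ((Q : ℝ) * T)⁻¹ := by
      rw [div_lt_iff₀ hQR]
      have e : ((Q : ℝ) * T)⁻¹ * Q = (T : ℝ)⁻¹ := by
        rw [mul_comm (Q : ℝ) (T : ℝ), mul_inv, mul_assoc, inv_mul_cancel₀ hQR.ne', mul_one]
      rw [e]; exact hlam
    set ρ : ℝ := (lam / Q + ((Q : ℝ) * T)⁻¹) / 2 with hρdef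
    have hρ0 : 0 < ρ := by positivity
    have hρlt : ρ < ((Q : ℝ) * T)⁻¹ := by rw [hρdef]; linarith
    have hρgt : lam / Q < ρ := by rw [hρdef]; linarith
    refine ⟨ρ, hρ0, hρlt, ?_⟩
    have hρQ : ρ ≤ 1 / Q := by
      have h1 : ((Q : ℝ) * T)⁻¹ ≤ (Q : ℝ)⁻¹ := by
        apply inv_anti₀ hQR
        nlinarith
      rw [inv_eq_one_div (Q : ℝ)] at h1
      linarith
    have hQρ : lam < (Q : ℝ) * ρ := by
      have := mul_lt_mul_of_pos_left hρgt hQR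
      rwa [mul_div_cancel₀ _ hQR.ne'] at this
    calc ENNReal.ofReal lam < ENNReal.ofReal ((Q : ℝ) * ρ) :=
          (ENNReal.ofReal_lt_ofReal_iff (by positivity)).mpr hQρ
      _ ≤ volume (Set.Icc (0 : ℝ) 1 ∩ GammaQ Q ρ) := gamma_vol_aux Q hQ ρ hρ0 hρQ


end
end

section
/- Let A ⊆ ℕ be finite and let 𝒞^1,...,𝒞^k be clusters of A. For each l ∈ {1,...,k}, let Γ^l := Γ(𝒞^l, ρ^l) = {ξ ∈ ℝ : dist(ξ, Q_l^{−1}ℤ) < ρ_l/2} be the set associated to 𝒞^l with parameters Q_l, T_l, ρ_l, and suppose H^1([0,1] ∩ Γ^l) > λ_l. Then there exist τ_1,...,τ_k ∈ [0,1] such that H^1([0,1] ∩ ⋂_{l=1}^k (Γ^l + τ_l)) > ∏_{l=1}^k λ_l, and moreover the set Γ^{1,...,k} := ⋂_{l=1}^k (Γ^l + τ_l) satisfies dist(Γ^{1,...,k} − Γ^{1,...,k}, ⋃_{l=1}^k Σ(𝒞^l)) > 0. -/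
/-!
Averaging over the translation: on the circle `ℝ/ℤ` with its Haar probability measure,
`∫ |E ∩ (F - τ)| dτ = |E| |F|`, so `|E| > a` and `|F| > b` force `|E ∩ (F - τ)| > a b` for some
`τ`; induction on the number of sets handles the 1-periodic sets `Γ^l`.

For the separation, a zero `w` of `Φ_s(e^{2πiξ})` is `i/s + z₀` with `i` coprime to `s`. As
`s ∤ Q`, the integer `iQ - zs` is nonzero, and it is divisible by `gcd(s, Q)`, so
`|w - z/Q| ≥ gcd(s, Q)/(sQ) = 1/(tQ) ≥ 1/(TQ)`. A difference of two points of
`⋂_l (Γ^l + τ_l)` lies within `ρ_l` of `Q_l⁻¹ℤ`, so `ε = min_l (1/(Q_l T_l) - ρ_l)` works.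
-/

open MeasureTheory Filter Set Polynomial
open scoped ENNReal Real BigOperators

noncomputable section

section Translates

variable {G : Type*} [MeasurableSpace G] [AddGroup G] [MeasurableAdd₂ G]
  {μ : Measure G} [SFinite μ] [μ.IsAddLeftInvariant]

theorem lintegral_measure_inter_preimage_add_right {E F : Set G} (hE : MeasurableSet E)
    (hF : MeasurableSet F) :
    ∫⁻ τ, μ (E ∩ (· + τ) ⁻¹' F) ∂μ = μ E * μ F := by
  have hF' : ∀ τ : G, MeasurableSet ((· + τ) ⁻¹' F) := fun τ => measurable_add_const τ hF
  have hmeas : Measurable fun p : G × G =>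
      E.indicator 1 p.2 * F.indicator (1 : G → ℝ≥0∞) (p.2 + p.1) :=
    ((measurable_one.indicator hE).comp measurable_snd).mul
      ((measurable_one.indicator hF).comp (measurable_snd.add measurable_fst))
  calc ∫⁻ τ, μ (E ∩ (· + τ) ⁻¹' F) ∂μ
      = ∫⁻ τ, ∫⁻ x, E.indicator 1 x * F.indicator 1 (x + τ) ∂μ ∂μ := by
        refine lintegral_congr fun τ => ?_
        rw [← lintegral_indicator_one (hE.inter (hF' τ)), inter_indicator_one]
        rfl
    _ = ∫⁻ x, ∫⁻ τ, E.indicator 1 x * F.indicator 1 (x + τ) ∂μ ∂μ :=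
        lintegral_lintegral_swap hmeas.aemeasurable
    _ = ∫⁻ x, E.indicator 1 x * μ F ∂μ := by
        refine lintegral_congr fun x => ?_
        rw [lintegral_const_mul (f := fun τ => F.indicator 1 (x + τ))
            _ ((measurable_one.indicator hF).comp (measurable_const_add x)),
          lintegral_add_left_eq_self (F.indicator 1) x, lintegral_indicator_one hF]
    _ = μ E * μ F := by
        rw [lintegral_mul_const _ (measurable_one.indicator hE), lintegral_indicator_one hE]

variable [IsProbabilityMeasure μ]

theorem exists_lt_measure_inter_preimage_add_right {E F : Set G} (hE : MeasurableSet E)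
    (hF : MeasurableSet F) {a b : ℝ≥0∞} (ha : a < μ E) (hb : b < μ F) :
    ∃ τ, a * b < μ (E ∩ (· + τ) ⁻¹' F) := by
  by_contra! h
  have := calc μ E * μ F
      = ∫⁻ τ, μ (E ∩ (· + τ) ⁻¹' F) ∂μ :=
        (lintegral_measure_inter_preimage_add_right hE hF).symm
    _ ≤ ∫⁻ _, a * b ∂μ := lintegral_mono h
    _ = a * b := by rw [lintegral_const, measure_univ, mul_one]
  exact this.not_gt (ENNReal.mul_lt_mul ha hb)

theorem exists_lt_measure_iInter_preimage_add_right {n : ℕ} {E : Fin (n + 1) → Set G}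
    (hE : ∀ i, MeasurableSet (E i)) {a : Fin (n + 1) → ℝ≥0∞} (ha : ∀ i, a i < μ (E i)) :
    ∃ τ : Fin (n + 1) → G, ∏ i, a i < μ (⋂ i, (· + τ i) ⁻¹' E i) := by
  induction n with
  | zero =>
    refine ⟨0, ?_⟩
    have hE0 : ⋂ i, (· + (0 : Fin 1 → G) i) ⁻¹' E i = E 0 := by
      ext x
      simp [Fin.forall_fin_one]
    rw [hE0, Fin.prod_univ_one]
    exact ha 0
  | succ n ih =>
    obtain ⟨τ, hτ⟩ := ih (fun i => hE i.succ) (fun i => ha i.succ)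
    have hH : MeasurableSet (⋂ i, (· + τ i) ⁻¹' E i.succ) :=
      .iInter fun i => measurable_add_const _ (hE i.succ)
    obtain ⟨τ₀, hτ₀⟩ := exists_lt_measure_inter_preimage_add_right hH (hE 0) hτ (ha 0)
    refine ⟨Fin.cons τ₀ τ, ?_⟩
    have hsplit : ⋂ i, (· + (Fin.cons τ₀ τ : Fin (n + 2) → G) i) ⁻¹' E i
        = (⋂ i, (· + τ i) ⁻¹' E i.succ) ∩ (· + τ₀) ⁻¹' E 0 := by
      ext x
      simp only [mem_iInter, mem_inter_iff, Fin.forall_fin_succ, Fin.cons_zero, Fin.cons_succ]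
      tauto
    rwa [Fin.prod_univ_succ, mul_comm, hsplit]

end Translates

theorem volume_Icc_inter_preimage_coe_unitAddCircle {S : Set UnitAddCircle}
    (hS : MeasurableSet S) :
    volume (Icc (0 : ℝ) 1 ∩ (↑) ⁻¹' S) = volume S := by
  have hpre : MeasurableSet (((↑) : ℝ → UnitAddCircle) ⁻¹' S) := measurableSet_quotient.mp hS
  rw [← (UnitAddCircle.measurePreserving_mk 0).measure_preimage hS.nullMeasurableSet,
    Measure.restrict_apply hpre, zero_add, inter_comm,
    measure_congr ((ae_eq_refl _).inter (Ioc_ae_eq_Icc (μ := volume)))]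

theorem exists_lt_volume_Icc_inter_iInter_image_add_right {n : ℕ} {G : Fin (n + 1) → Set ℝ}
    (hG : ∀ i, MeasurableSet (G i)) (hper : ∀ i, Function.Periodic (· ∈ G i) 1)
    {a : Fin (n + 1) → ℝ≥0∞} (ha : ∀ i, a i < volume (Icc (0 : ℝ) 1 ∩ G i)) :
    ∃ τ : Fin (n + 1) → ℝ, (∀ i, τ i ∈ Icc (0 : ℝ) 1) ∧
      ∏ i, a i < volume (Icc (0 : ℝ) 1 ∩ ⋂ i, (· + τ i) '' G i) := by
  have : IsProbabilityMeasure (volume : Measure UnitAddCircle) := ⟨UnitAddCircle.measure_univ⟩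
  set E : Fin (n + 1) → Set UnitAddCircle := fun i => {u | (hper i).lift u}
  have hGE : ∀ i, G i = (↑) ⁻¹' E i := fun i => by
    ext x
    exact (eq_iff_iff.mp ((hper i).lift_coe x)).symm
  have hE : ∀ i, MeasurableSet (E i) := fun i => measurableSet_quotient.mpr (hGE i ▸ hG i)
  obtain ⟨σ, hσ⟩ := exists_lt_measure_iInter_preimage_add_right hE fun i => by
    rw [← volume_Icc_inter_preimage_coe_unitAddCircle (hE i), ← hGE]; exact ha i
  -- `(· + τ) '' G = (· - τ) ⁻¹' G`, so `τ i` must represent `-σ i`.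
  set τ : Fin (n + 1) → ℝ := fun i => AddCircle.equivIco 1 0 (-σ i)
  refine ⟨τ, fun i => Ico_subset_Icc_self (by simpa using (AddCircle.equivIco 1 0 (-σ i)).2), ?_⟩
  have hτ : ∀ i, ((-τ i : ℝ) : UnitAddCircle) = σ i := fun i => by
    simp [τ, AddCircle.coe_equivIco]
  have hset : ⋂ i, (· + τ i) '' G i = (↑) ⁻¹' ⋂ i, (· + σ i) ⁻¹' E i := by
    simp only [image_add_right, preimage_iInter, hGE, preimage_preimage,
      QuotientAddGroup.mk_add, ← hτ]
  rwa [hset, volume_Icc_inter_preimage_coe_unitAddCircle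
    (.iInter fun i => measurable_add_const _ (hE i))]

theorem isOpen_GammaQ (Q : ℕ) (ρ : ℝ) : IsOpen (GammaQ Q ρ) := by
  have : GammaQ Q ρ = ⋃ z : ℤ, Metric.ball ((z : ℝ) / Q) (ρ / 2) := by
    ext ξ
    simp [GammaQ, Real.dist_eq]
  exact this ▸ isOpen_iUnion fun _ => Metric.isOpen_ball

theorem periodic_mem_GammaQ {Q : ℕ} (hQ : 0 < Q) (ρ : ℝ) :
    Function.Periodic (· ∈ GammaQ Q ρ) 1 := by
  have hQ' : (Q : ℝ) ≠ 0 := by positivity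
  intro x
  refine propext ⟨fun ⟨z, hz⟩ => ⟨z - Q, ?_⟩, fun ⟨z, hz⟩ => ⟨z + Q, ?_⟩⟩
  · convert hz using 2
    push_cast; field_simp; ring
  · convert hz using 2
    push_cast; field_simp; ring

theorem sub_mem_GammaQ {Q : ℕ} {ρ x y : ℝ} (hx : x ∈ GammaQ Q ρ) (hy : y ∈ GammaQ Q ρ) :
    x - y ∈ GammaQ Q (2 * ρ) := by
  obtain ⟨z₁, hz₁⟩ := hx
  obtain ⟨z₂, hz₂⟩ := hy
  refine ⟨z₁ - z₂, ?_⟩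
  calc |x - y - ((z₁ - z₂ : ℤ) : ℝ) / Q| = |(x - z₁ / Q) - (y - z₂ / Q)| := by
        push_cast; ring_nf
    _ ≤ |x - z₁ / Q| + |y - z₂ / Q| := abs_sub _ _
    _ < 2 * ρ / 2 := by linarith

theorem exists_coprime_of_eval_exp_cyclotomic_eq_zero {s : ℕ} {w : ℝ}
    (hw : (cyclotomic s ℂ).eval (Complex.exp (2 * π * Complex.I * w)) = 0) :
    0 < s ∧ ∃ i : ℕ, i.Coprime s ∧ ∃ z : ℤ, w = i / s + z := by
  obtain rfl | hs := s.eq_zero_or_pos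
  · simp at hw
  have : NeZero (s : ℂ) := ⟨by exact_mod_cast hs.ne'⟩
  obtain ⟨i, -, hi, hexp⟩ :=
    (Complex.isPrimitiveRoot_iff _ s hs.ne').mp (isRoot_cyclotomic_iff.mp hw)
  obtain ⟨z, hz⟩ := Complex.exp_eq_exp_iff_exists_int.mp hexp
  refine ⟨hs, i, hi, -z, ?_⟩
  have h2πI : 2 * (π : ℂ) * Complex.I ≠ 0 := by simp [Real.pi_ne_zero]
  have : (w : ℂ) = ((i / s + (-z : ℤ) : ℝ) : ℂ) := by
    apply mul_left_cancel₀ h2πI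
    push_cast
    linear_combination -hz
  exact_mod_cast this

theorem inv_mul_le_abs_div_sub_div {s Q i : ℕ} (hs : 0 < s) (hQ : 0 < Q) (hsQ : ¬ s ∣ Q)
    (hi : i.Coprime s) (z : ℤ) :
    (((s / s.gcd Q : ℕ) : ℝ) * Q)⁻¹ ≤ |(i : ℝ) / s - z / Q| := by
  set N : ℤ := i * Q - z * s
  have hN : N ≠ 0 := by
    intro h0
    have : (s : ℤ) ∣ ((i * Q : ℕ) : ℤ) := ⟨z, by push_cast; linarith⟩
    exact hsQ (hi.symm.dvd_of_dvd_mul_left (Int.natCast_dvd_natCast.mp this))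
  have hrN : ((s.gcd Q : ℕ) : ℤ) ∣ N :=
    dvd_sub (dvd_mul_of_dvd_right (by exact_mod_cast s.gcd_dvd_right Q) _)
      (dvd_mul_of_dvd_right (by exact_mod_cast s.gcd_dvd_left Q) _)
  have hr : ((s.gcd Q : ℕ) : ℝ) ≤ |(N : ℝ)| := by
    rw [← Int.cast_abs]
    exact_mod_cast Int.le_of_dvd (abs_pos.mpr hN) ((dvd_abs _ _).mpr hrN)
  have hr0 : (s.gcd Q : ℝ) ≠ 0 := by exact_mod_cast (Nat.gcd_pos_of_pos_left Q hs).ne'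
  calc (((s / s.gcd Q : ℕ) : ℝ) * Q)⁻¹ = (s.gcd Q : ℝ) / (s * Q) := by
        rw [Nat.cast_div (s.gcd_dvd_left Q) hr0]; field_simp
    _ ≤ |(N : ℝ)| / (s * Q) := by gcongr
    _ = |(i : ℝ) / s - z / Q| := by
        rw [← abs_of_pos (by positivity : (0 : ℝ) < s * Q), ← abs_div]
        congr 1
        push_cast [N]
        field_simp

theorem inv_mul_sup_le_abs_sub_div_of_mem_SigmaCluster {𝒞 : Finset ℕ} {Q : ℕ} (hQ : 0 < Q)
    (hndvd : ∀ s ∈ 𝒞, ¬ s ∣ Q) {w : ℝ} (hw : w ∈ SigmaCluster 𝒞) (z : ℤ) :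
    ((Q : ℝ) * ((𝒞.sup fun s => s / s.gcd Q : ℕ) : ℝ))⁻¹ ≤ |w - z / Q| := by
  obtain ⟨s, hs𝒞, hroot⟩ := hw
  obtain ⟨hs, i, hi, z₀, rfl⟩ := exists_coprime_of_eval_exp_cyclotomic_eq_zero hroot
  have ht : 0 < s / s.gcd Q :=
    Nat.div_pos (Nat.le_of_dvd hs (s.gcd_dvd_left Q)) (Nat.gcd_pos_of_pos_left Q hs)
  have htT : s / s.gcd Q ≤ 𝒞.sup fun s => s / s.gcd Q :=
    Finset.le_sup (f := fun s => s / s.gcd Q) hs𝒞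
  calc ((Q : ℝ) * ((𝒞.sup fun s => s / s.gcd Q : ℕ) : ℝ))⁻¹
      ≤ (((s / s.gcd Q : ℕ) : ℝ) * Q)⁻¹ := by
        rw [mul_comm]
        gcongr
    _ ≤ |(i : ℝ) / s - ((z - z₀ * Q : ℤ) : ℝ) / Q| :=
        inv_mul_le_abs_div_sub_div hs hQ (hndvd s hs𝒞) hi _
    _ = |(i : ℝ) / s + z₀ - z / Q| := by
        congr 1
        push_cast
        field_simp
        ring

theorem inv_mul_sup_sub_le_abs_sub_of_mem_SigmaCluster {𝒞 : Finset ℕ} {Q : ℕ} (hQ : 0 < Q)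
    (hndvd : ∀ s ∈ 𝒞, ¬ s ∣ Q) {ρ d w : ℝ} (hd : d ∈ GammaQ Q (2 * ρ))
    (hw : w ∈ SigmaCluster 𝒞) :
    ((Q : ℝ) * ((𝒞.sup fun s => s / s.gcd Q : ℕ) : ℝ))⁻¹ - ρ ≤ |d - w| := by
  obtain ⟨z, hz⟩ := hd
  have := inv_mul_sup_le_abs_sub_div_of_mem_SigmaCluster hQ hndvd hw z
  have := abs_sub_le w d (z / Q)
  rw [abs_sub_comm w d] at this
  linarith

theorem translated_cluster_SLV_sets_general (k : ℕ) (hk : 1 ≤ k)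
    (𝒞 : Fin k → Finset ℕ)
    (Q : Fin k → ℕ) (hQ : ∀ l, 0 < Q l)
    (hndvd : ∀ l, ∀ s ∈ 𝒞 l, ¬ s ∣ Q l)
    (ρ lam : Fin k → ℝ)
    (hρ : ∀ l, 0 < ρ l ∧
      ρ l < ((Q l : ℝ) * ((((𝒞 l).sup fun s => s / Nat.gcd s (Q l)) : ℕ) : ℝ))⁻¹)
    (hlam : ∀ l, 0 < lam l)
    (hmeas : ∀ l, ENNReal.ofReal (lam l) < volume (Set.Icc (0 : ℝ) 1 ∩ GammaQ (Q l) (ρ l))) :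
    ∃ τ : Fin k → ℝ, (∀ l, τ l ∈ Set.Icc (0 : ℝ) 1) ∧
      ENNReal.ofReal (∏ l, lam l) <
        volume (Set.Icc (0 : ℝ) 1 ∩ ⋂ l, (fun x => x + τ l) '' GammaQ (Q l) (ρ l)) ∧
      ∃ ε : ℝ, 0 < ε ∧
        ∀ x ∈ ⋂ l, (fun x => x + τ l) '' GammaQ (Q l) (ρ l),
        ∀ y ∈ ⋂ l, (fun x => x + τ l) '' GammaQ (Q l) (ρ l),
        ∀ w ∈ ⋃ l, SigmaCluster (𝒞 l), ε ≤ |x - y - w| := by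
  obtain ⟨n, rfl⟩ : ∃ n, k = n + 1 := ⟨k - 1, by omega⟩
  obtain ⟨τ, hτ, hvol⟩ := exists_lt_volume_Icc_inter_iInter_image_add_right
    (fun l => (isOpen_GammaQ _ _).measurableSet) (fun l => periodic_mem_GammaQ (hQ l) _) hmeas
  let ε l := ((Q l : ℝ) * ((((𝒞 l).sup fun s => s / Nat.gcd s (Q l)) : ℕ) : ℝ))⁻¹ - ρ l
  refine ⟨τ, hτ, by rwa [ENNReal.ofReal_prod_of_nonneg fun l _ => (hlam l).le],
    Finset.univ.inf' Finset.univ_nonempty ε,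
    (Finset.lt_inf'_iff _).mpr fun l _ => sub_pos.mpr (hρ l).2, ?_⟩
  intro x hx y hy w hw
  obtain ⟨l, hw⟩ := mem_iUnion.mp hw
  have hxy : x - y ∈ GammaQ (Q l) (2 * ρ l) := by
    obtain ⟨x', hx', rfl⟩ := mem_iInter.mp hx l
    obtain ⟨y', hy', rfl⟩ := mem_iInter.mp hy l
    simpa using sub_mem_GammaQ hx' hy'
  exact (Finset.inf'_le ε (Finset.mem_univ l)).trans
    (inv_mul_sup_sub_le_abs_sub_of_mem_SigmaCluster (hQ l) (hndvd l) hxy hw)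

/-- **Intersecting translated cluster SLV sets**: given clusters `𝒞^1, …, 𝒞^k` of `A`
with associated sets `Γ^l = Γ(𝒞^l, ρ_l)` satisfying `H^1([0,1] ∩ Γ^l) > λ_l`, there are
translations `τ_1, …, τ_k ∈ [0,1]` with
`H^1([0,1] ∩ ⋂_l (Γ^l + τ_l)) > ∏_l λ_l` and
`dist(⋂_l (Γ^l + τ_l) - ⋂_l (Γ^l + τ_l), ⋃_l Σ(𝒞^l)) > 0`. -/
theorem translated_cluster_SLV_sets (A : Finset ℕ) (k : ℕ) (hk : 1 ≤ k)
    (𝒞 : Fin k → Finset ℕ) (h𝒞 : ∀ l, ↑(𝒞 l) ⊆ SA2 A) (h𝒞ne : ∀ l, (𝒞 l).Nonempty)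
    (Q U : Fin k → ℕ) (hQ : ∀ l, 0 < Q l)
    (hQU : ∀ l, (𝒞 l).lcm id = Q l * U l)
    (hndvd : ∀ l, ∀ s ∈ 𝒞 l, ¬ s ∣ Q l)
    (ρ lam : Fin k → ℝ)
    (hρ : ∀ l, 0 < ρ l ∧
      ρ l < ((Q l : ℝ) * ((((𝒞 l).sup fun s => s / Nat.gcd s (Q l)) : ℕ) : ℝ))⁻¹)
    (hlam : ∀ l, 0 < lam l)
    (hmeas : ∀ l, ENNReal.ofReal (lam l) < volume (Set.Icc (0 : ℝ) 1 ∩ GammaQ (Q l) (ρ l))) :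
    ∃ τ : Fin k → ℝ, (∀ l, τ l ∈ Set.Icc (0 : ℝ) 1) ∧
      ENNReal.ofReal (∏ l, lam l) <
        volume (Set.Icc (0 : ℝ) 1 ∩ ⋂ l, (fun x => x + τ l) '' GammaQ (Q l) (ρ l)) ∧
      ∃ ε : ℝ, 0 < ε ∧
        ∀ x ∈ ⋂ l, (fun x => x + τ l) '' GammaQ (Q l) (ρ l),
        ∀ y ∈ ⋂ l, (fun x => x + τ l) '' GammaQ (Q l) (ρ l),
        ∀ w ∈ ⋃ l, SigmaCluster (𝒞 l), ε ≤ |x - y - w| :=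
  translated_cluster_SLV_sets_general k hk 𝒞 Q hQ hndvd ρ lam hρ hlam hmeas
end
end
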